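/- arXiv:0809.0088 — 2 statements merged into one kernel-verified Lean document; each statement's English description precedes it below -/
import Mathlib

section
/- For any d-polytope P, the sum over all i with i even of f_i(P) equals the sum over all i with i odd of f_i(P), where the improper faces are counted, i.e., f_{-1}(P) = f_d(P) = 1. Equivalently, the number of faces of P of even dimension (including the empty face of dimension -1 counted as odd index -1, so counted among dimensions congruent to 1 mod 2) equals the number of faces of odd dimension. -/
/-!
The Euler characteristic is a valuation. Call a nonempty bounded convex set a cell if it is closed
or relatively open, and give it the weight `χ = 1`, resp. `χ = (-1) ^ dim`. Any linear relation
`∑ cᵢ 1_{Uᵢ} = 0` between indicator functions of cells forces `∑ cᵢ χ(Uᵢ) = 0`. On the line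
this is read off from the jumps of the indicator functions. In `F × ℝ`, applying the line case on
every vertical line and using `χ(W) = χ(pr W) · χ(W ∩ line)` turns the relation into one between
the projected cells in `F`, to which induction applies. Finally, a polytope is the disjoint union
of the relative interiors of its nonempty faces, so `1 = χ(P) = ∑_F (-1) ^ dim F`.
-/

open Set Module Bornology Filter Metric
open scoped Topology

section IntrinsicInterior

variable {E : Type*} [NormedAddCommGroup E] [NormedSpace ℝ E] {s : Set E} {x : E}

theorem mem_intrinsicInterior_iff_dist :
    x ∈ intrinsicInterior ℝ s ↔
      x ∈ s ∧ ∃ ε > 0, ∀ y ∈ affineSpan ℝ s, dist y x < ε → y ∈ s := by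
  constructor
  · rintro ⟨y, hy, rfl⟩
    obtain ⟨ε, hε, hball⟩ := Metric.mem_nhds_iff.1 (mem_interior_iff_mem_nhds.1 hy)
    exact ⟨interior_subset (s := Subtype.val ⁻¹' s) hy, ε, hε, fun z hz hzy =>
      hball (show (⟨z, hz⟩ : affineSpan ℝ s) ∈ ball y ε from hzy)⟩
  · rintro ⟨hxs, ε, hε, hball⟩
    exact ⟨⟨x, subset_affineSpan ℝ s hxs⟩, mem_interior_iff_mem_nhds.2 <|
      Metric.mem_nhds_iff.2 ⟨ε, hε, fun z hz => hball z z.2 hz⟩, rfl⟩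

theorem Convex.lineMap_mem_intrinsicInterior (hs : Convex ℝ s) {y z : E} (hy : y ∈ s)
    (hz : z ∈ intrinsicInterior ℝ s) {t : ℝ} (ht₀ : 0 < t) (ht₁ : t ≤ 1) :
    AffineMap.lineMap y z t ∈ intrinsicInterior ℝ s := by
  obtain ⟨hzs, ε, hε, hball⟩ := mem_intrinsicInterior_iff_dist.1 hz
  refine mem_intrinsicInterior_iff_dist.2
    ⟨hs.lineMap_mem hy hzs ⟨ht₀.le, ht₁⟩, t * ε, mul_pos ht₀ hε, fun y' hy' hdist => ?_⟩
  -- `y'` is the image under the homothety of ratio `t` about `y` of a point near `z`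
  have hscale : ∀ a b : E, dist (AffineMap.lineMap y a t⁻¹) (AffineMap.lineMap y b t⁻¹) =
      t⁻¹ * dist a b := fun a b => by
    rw [AffineMap.lineMap_apply_module', AffineMap.lineMap_apply_module', dist_eq_norm,
      dist_eq_norm, add_sub_add_right_eq_sub, ← smul_sub, sub_sub_sub_cancel_right, norm_smul,
      Real.norm_of_nonneg (inv_nonneg.2 ht₀.le)]
  have hq : AffineMap.lineMap y y' t⁻¹ ∈ s := by
    refine hball _ (AffineMap.lineMap_mem _ (subset_affineSpan ℝ s hy) hy') ?_
    have hz : z = AffineMap.lineMap y (AffineMap.lineMap y z t) t⁻¹ := by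
      rw [AffineMap.lineMap_lineMap_right, inv_mul_cancel₀ ht₀.ne', AffineMap.lineMap_apply_one]
    rw [hz, hscale, inv_mul_lt_iff₀ ht₀]
    exact hdist
  have hy' : y' = AffineMap.lineMap y (AffineMap.lineMap y y' t⁻¹) t := by
    rw [AffineMap.lineMap_lineMap_right, mul_inv_cancel₀ ht₀.ne', AffineMap.lineMap_apply_one]
  rw [hy']
  exact hs.lineMap_mem hy hq ⟨ht₀.le, ht₁⟩

protected theorem Convex.intrinsicInterior (hs : Convex ℝ s) :
    Convex ℝ (intrinsicInterior ℝ s) := by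
  intro y hy z hz a b ha hb hab
  rcases hb.eq_or_lt with rfl | hb
  · rw [add_zero] at hab
    simpa [hab] using hy
  · have := hs.lineMap_mem_intrinsicInterior (intrinsicInterior_subset hy) hz hb (by linarith)
    rwa [AffineMap.lineMap_apply_module, ← hab, add_sub_cancel_right] at this

theorem Convex.subset_closure_intrinsicInterior (hs : Convex ℝ s)
    (hne : (intrinsicInterior ℝ s).Nonempty) : s ⊆ closure (intrinsicInterior ℝ s) := by
  obtain ⟨z, hz⟩ := hne
  intro y hy
  have hlim : Tendsto (AffineMap.lineMap y z) (𝓝[>] (0 : ℝ)) (𝓝 y) := by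
    simpa using ((AffineMap.lineMap_continuous (R := ℝ) (p := y) (q := z)).tendsto 0).mono_left
      nhdsWithin_le_nhds
  refine mem_closure_of_tendsto hlim ?_
  filter_upwards [Ioc_mem_nhdsGT one_pos] with t ht
  exact hs.lineMap_mem_intrinsicInterior hy hz ht.1 ht.2

theorem Convex.affineSpan_intrinsicInterior [FiniteDimensional ℝ E] (hs : Convex ℝ s)
    (hne : (intrinsicInterior ℝ s).Nonempty) :
    affineSpan ℝ (intrinsicInterior ℝ s) = affineSpan ℝ s := by
  refine le_antisymm (affineSpan_mono ℝ intrinsicInterior_subset) (affineSpan_le.2 ?_)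
  exact (hs.subset_closure_intrinsicInterior hne).trans
    (closure_minimal (subset_affineSpan ℝ _) (AffineSubspace.closed_of_finiteDimensional _))

def IsRelOpen (U : Set E) : Prop :=
  intrinsicInterior ℝ U = U

theorem isRelOpen_iff_dist {U : Set E} :
    IsRelOpen U ↔ ∀ x ∈ U, ∃ ε > 0, ∀ y ∈ affineSpan ℝ U, dist y x < ε → y ∈ U := by
  refine ⟨fun h x hx => (mem_intrinsicInterior_iff_dist.1 (h.symm ▸ hx)).2,
    fun h => Subset.antisymm intrinsicInterior_subset fun x hx => ?_⟩
  exact mem_intrinsicInterior_iff_dist.2 ⟨hx, h x hx⟩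

theorem Convex.isRelOpen_intrinsicInterior [FiniteDimensional ℝ E] (hs : Convex ℝ s) :
    IsRelOpen (intrinsicInterior ℝ s) := by
  rcases (intrinsicInterior ℝ s).eq_empty_or_nonempty with h | hne
  · rw [IsRelOpen, h, intrinsicInterior_empty]
  rw [isRelOpen_iff_dist, hs.affineSpan_intrinsicInterior hne]
  intro x hx
  obtain ⟨-, ε, hε, hball⟩ := mem_intrinsicInterior_iff_dist.1 hx
  refine ⟨ε / 2, half_pos hε, fun y hy hyx => mem_intrinsicInterior_iff_dist.2
    ⟨hball y hy (by linarith), ε / 2, half_pos hε, fun z hz hzy => hball z hz ?_⟩⟩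
  linarith [dist_triangle z y x]

end IntrinsicInterior

section RelOpen

variable {E E' : Type*} [NormedAddCommGroup E] [NormedSpace ℝ E]
  [NormedAddCommGroup E'] [NormedSpace ℝ E'] {U : Set E}

theorem IsRelOpen.affineSpan_subset_of_isClosed (hU : IsRelOpen U) (hcl : IsClosed U)
    (hne : U.Nonempty) : (affineSpan ℝ U : Set E) ⊆ U := by
  -- `U` is clopen in the connected space `affineSpan ℝ U`
  have : PreconnectedSpace (affineSpan ℝ U) :=
    isPreconnected_iff_preconnectedSpace.1 (AffineSubspace.convex _).isPreconnected
  have hopen : IsOpen ((↑) ⁻¹' U : Set (affineSpan ℝ U)) := by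
    have : ((↑) ⁻¹' U : Set (affineSpan ℝ U)) = interior ((↑) ⁻¹' U) :=
      calc ((↑) ⁻¹' U : Set (affineSpan ℝ U)) = (↑) ⁻¹' intrinsicInterior ℝ U := by rw [hU]
        _ = interior ((↑) ⁻¹' U) := Subtype.val_injective.preimage_image _
    rw [this]
    exact isOpen_interior
  obtain ⟨x, hx⟩ := hne
  have huniv := IsClopen.eq_univ ⟨hcl.preimage continuous_subtype_val, hopen⟩
    ⟨⟨x, subset_affineSpan ℝ U hx⟩, hx⟩
  exact fun y hy => (eq_univ_iff_forall.1 huniv ⟨y, hy⟩ :)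

theorem IsRelOpen.vectorSpan_eq_bot_of_isClosed (hU : IsRelOpen U) (hcl : IsClosed U)
    (hb : IsBounded U) (hne : U.Nonempty) : vectorSpan ℝ U = ⊥ := by
  obtain ⟨x, hx⟩ := hne
  obtain ⟨C, hC⟩ := isBounded_iff_forall_norm_le.1 hb
  have hline : ∀ v ∈ vectorSpan ℝ U, ∀ t : ℝ, ‖t • v‖ ≤ C + ‖x‖ := fun v hv t => by
    have hmem : t • v + x ∈ U := hU.affineSpan_subset_of_isClosed hcl ⟨x, hx⟩ <|
      AffineSubspace.vadd_mem_of_mem_direction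
        (by rw [direction_affineSpan]; exact Submodule.smul_mem _ t hv)
        (subset_affineSpan ℝ U hx)
    calc ‖t • v‖ = ‖(t • v + x) - x‖ := by rw [add_sub_cancel_right]
      _ ≤ ‖t • v + x‖ + ‖x‖ := norm_sub_le _ _
      _ ≤ C + ‖x‖ := by linarith [hC _ hmem]
  refine (Submodule.eq_bot_iff _).2 fun v hv => by_contra fun hv0 => ?_
  have hpos : 0 < C + ‖x‖ + 1 := by linarith [hC x hx, norm_nonneg x]
  have := hline v hv ((C + ‖x‖ + 1) / ‖v‖)
  rw [norm_smul, Real.norm_of_nonneg (by positivity),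
    div_mul_cancel₀ _ (norm_ne_zero_iff.2 hv0)] at this
  linarith

theorem IsRelOpen.image_linearMap [FiniteDimensional ℝ E] (hU : IsRelOpen U)
    (f : E →ₗ[ℝ] E') : IsRelOpen (f '' U) := by
  rw [isRelOpen_iff_dist] at hU ⊢
  rintro _ ⟨u, hu, rfl⟩
  obtain ⟨δ, hδ, hball⟩ := hU u hu
  -- a continuous right inverse `ρ` of `f` between the directions of the two affine spans
  set g := f.domRestrict (vectorSpan ℝ U)
  obtain ⟨ρ, hρ⟩ :=
    g.rangeRestrict.exists_rightInverse_of_surjective (LinearMap.range_rangeRestrict _)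
  obtain ⟨ε, hε, hρε⟩ := Metric.continuousAt_iff.1
    (ρ.continuous_of_finiteDimensional.continuousAt (x := 0)) δ hδ
  refine ⟨ε, hε, fun y hy hyu => ?_⟩
  have hspan : vectorSpan ℝ (f '' U) = LinearMap.range g := by
    simpa [g] using (f.toAffineMap.map_vectorSpan (s := U)).symm
  have hw : y - f u ∈ LinearMap.range g := by
    rw [← hspan, ← direction_affineSpan]
    exact AffineSubspace.vsub_mem_direction hy (subset_affineSpan ℝ _ (mem_image_of_mem f hu))
  set v := ρ ⟨y - f u, hw⟩
  have hv : dist (v : E) 0 < δ := by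
    simpa using hρε (x := ⟨y - f u, hw⟩) (by simpa [dist_eq_norm] using hyu)
  have hfv : f v = y - f u := congrArg Subtype.val (LinearMap.congr_fun hρ ⟨y - f u, hw⟩)
  refine ⟨v + u, hball _ ?_ (by simpa [dist_eq_norm] using hv), by simp [hfv]⟩
  exact AffineSubspace.vadd_mem_of_mem_direction (by rw [direction_affineSpan]; exact v.2)
    (subset_affineSpan ℝ U hu)

theorem IsRelOpen.preimage [FiniteDimensional ℝ E] {W : Set E'} (hW : IsRelOpen W)
    (φ : E →ᵃ[ℝ] E') : IsRelOpen (φ ⁻¹' W) := by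
  rw [isRelOpen_iff_dist] at hW ⊢
  intro x hx
  obtain ⟨δ, hδ, hball⟩ := hW (φ x) hx
  obtain ⟨ε, hε, hφε⟩ := Metric.continuousAt_iff.1
    (φ.continuous_of_finiteDimensional.continuousAt (x := x)) δ hδ
  refine ⟨ε, hε, fun y hy hyx => hball (φ y) ?_ (hφε hyx)⟩
  have hle : (affineSpan ℝ (φ ⁻¹' W)).map φ ≤ affineSpan ℝ W := by
    rw [AffineSubspace.map_span]
    exact affineSpan_mono ℝ (image_preimage_subset φ W)
  exact hle (mem_image_of_mem φ hy)

theorem IsRelOpen.vectorSpan_preimage [FiniteDimensional ℝ E] {W : Set E'} (hW : IsRelOpen W)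
    (φ : E →ᵃ[ℝ] E') (hne : (φ ⁻¹' W).Nonempty) :
    vectorSpan ℝ (φ ⁻¹' W) = (vectorSpan ℝ W).comap φ.linear := by
  refine le_antisymm (Submodule.map_le_iff_le_comap.1 ?_) fun v hv => ?_
  · rw [AffineMap.map_vectorSpan]
    exact vectorSpan_mono ℝ (image_preimage_subset φ W)
  obtain ⟨x, hx⟩ := hne
  obtain ⟨δ, hδ, hball⟩ := isRelOpen_iff_dist.1 hW (φ x) hx
  have hlim : Tendsto (fun c : ℝ => φ (c • v +ᵥ x)) (𝓝 0) (𝓝 (φ x)) := by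
    have : Continuous fun c : ℝ => φ (c • v +ᵥ x) :=
      φ.continuous_of_finiteDimensional.comp (by fun_prop)
    simpa using this.tendsto 0
  obtain ⟨c, hc, hc0⟩ := (((hlim.eventually (ball_mem_nhds _ hδ)).filter_mono
    nhdsWithin_le_nhds).and (self_mem_nhdsWithin (s := {(0 : ℝ)}ᶜ))).exists
  have hmem : c • v +ᵥ x ∈ φ ⁻¹' W := by
    refine hball _ ?_ hc
    rw [AffineMap.map_vadd]
    exact AffineSubspace.vadd_mem_of_mem_direction
      (by rw [direction_affineSpan, map_smul]; exact Submodule.smul_mem _ c hv)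
      (subset_affineSpan ℝ W hx)
  have := Submodule.smul_mem _ c⁻¹ (vsub_mem_vectorSpan ℝ hmem hx)
  rwa [vadd_vsub, inv_smul_smul₀ hc0] at this

end RelOpen

section Cells

variable {E E' : Type*} [NormedAddCommGroup E] [NormedSpace ℝ E]
  [NormedAddCommGroup E'] [NormedSpace ℝ E'] {U : Set E}

structure IsConvexCell (U : Set E) : Prop where
  nonempty : U.Nonempty
  convex : Convex ℝ U
  isBounded : IsBounded U
  isClosed_or_isRelOpen : IsClosed U ∨ IsRelOpen U

open Classical in
/-- On convex cells this is the Euler characteristic with compact supports: `1` on compact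
convex sets and `(-1) ^ dim` on bounded relatively open ones. -/
noncomputable def eulerChar (U : Set E) : ℤ :=
  if IsClosed U then 1 else (-1) ^ finrank ℝ (vectorSpan ℝ U)

theorem eulerChar_of_isClosed (h : IsClosed U) : eulerChar U = 1 := if_pos h

theorem IsConvexCell.eulerChar_of_isRelOpen (hU : IsConvexCell U) (hro : IsRelOpen U) :
    eulerChar U = (-1) ^ finrank ℝ (vectorSpan ℝ U) := by
  by_cases hcl : IsClosed U
  · rw [eulerChar_of_isClosed hcl,
      hro.vectorSpan_eq_bot_of_isClosed hcl hU.isBounded hU.nonempty, finrank_bot, pow_zero]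
  · exact if_neg hcl

theorem eulerChar_mul_self (U : Set E) : eulerChar U * eulerChar U = 1 := by
  unfold eulerChar
  split_ifs <;> simp [← mul_pow]

theorem IsClosed.image_linearMap_of_isBounded [FiniteDimensional ℝ E] (hcl : IsClosed U)
    (hb : IsBounded U) (f : E →ₗ[ℝ] E') : IsClosed (f '' U) :=
  ((isCompact_of_isClosed_isBounded hcl hb).image f.continuous_of_finiteDimensional).isClosed

theorem IsConvexCell.image_linearMap [FiniteDimensional ℝ E] (hU : IsConvexCell U)
    (f : E →ₗ[ℝ] E') : IsConvexCell (f '' U) where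
  nonempty := hU.nonempty.image f
  convex := hU.convex.linear_image f
  isBounded := f.toContinuousLinearMap.lipschitz.isBounded_image hU.isBounded
  isClosed_or_isRelOpen := hU.isClosed_or_isRelOpen.imp
    (fun hcl => hcl.image_linearMap_of_isBounded hU.isBounded f)
    (fun hro => hro.image_linearMap f)

theorem eulerChar_image_continuousLinearEquiv (e : E ≃L[ℝ] E') (U : Set E) :
    eulerChar (e '' U) = eulerChar U := by
  have hspan : vectorSpan ℝ (e '' U) = (vectorSpan ℝ U).map (e : E →ₗ[ℝ] E') := by
    simpa using ((e : E →ₗ[ℝ] E').toAffineMap.map_vectorSpan (s := U)).symm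
  unfold eulerChar
  rw [hspan, LinearEquiv.finrank_map_eq e.toLinearEquiv]
  have hcl : IsClosed (e '' U) ↔ IsClosed U := e.toHomeomorph.isClosed_image
  by_cases h : IsClosed U
  · rw [if_pos h, if_pos (hcl.2 h)]
  · rw [if_neg h, if_neg (mt hcl.1 h)]

end Cells

-- The index universe is explicit so that the property can be transported along equivalences
-- between spaces living in different universes.
def EulerCharRespectsRelations.{v} (E : Type*) [NormedAddCommGroup E] [NormedSpace ℝ E] :
    Prop :=
  ∀ (ι : Type v) (A : Finset ι) (U : ι → Set E) (c : ι → ℤ), (∀ i ∈ A, IsConvexCell (U i)) →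
    (∀ x, ∑ i ∈ A, c i * (U i).indicator 1 x = 0) → ∑ i ∈ A, c i * eulerChar (U i) = 0

section Line

universe v

variable {U : Set ℝ}

theorem IsConvexCell.Ioo_subset (hU : IsConvexCell U) : Ioo (sInf U) (sSup U) ⊆ U :=
  IsConnected.Ioo_csInf_csSup_subset ⟨hU.nonempty, hU.convex.isPreconnected⟩
    hU.isBounded.bddBelow hU.isBounded.bddAbove

theorem IsConvexCell.subset_Icc (hU : IsConvexCell U) : U ⊆ Icc (sInf U) (sSup U) :=
  subset_Icc_csInf_csSup hU.isBounded.bddBelow hU.isBounded.bddAbove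

theorem IsConvexCell.eventually_indicator_eq (hU : IsConvexCell U) (t : ℝ) :
    ∀ᶠ s in 𝓝[>] t, U.indicator (1 : ℝ → ℤ) s = (Ico (sInf U) (sSup U)).indicator 1 t := by
  rcases lt_or_ge t (sSup U) with hb | hb
  · rcases lt_or_ge t (sInf U) with ha | ha
    · filter_upwards [Ioo_mem_nhdsGT ha] with s hs
      rw [indicator_of_notMem fun h => hs.2.not_ge (hU.subset_Icc h).1,
        indicator_of_notMem fun h => ha.not_ge h.1]
    · filter_upwards [Ioo_mem_nhdsGT hb] with s hs
      rw [indicator_of_mem (hU.Ioo_subset ⟨ha.trans_lt hs.1, hs.2⟩),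
        indicator_of_mem (mem_Ico.2 ⟨ha, hb⟩), Pi.one_apply, Pi.one_apply]
  · filter_upwards [self_mem_nhdsWithin] with s (hs : t < s)
    rw [indicator_of_notMem fun h => (hb.trans_lt hs).not_ge (hU.subset_Icc h).2,
      indicator_of_notMem fun h => hb.not_gt h.2]

theorem IsConvexCell.eulerChar_eq_of_lt (hU : IsConvexCell U) (hlt : sInf U < sSup U) :
    eulerChar U = U.indicator 1 (sInf U) + U.indicator 1 (sSup U) - 1 := by
  have hbdd := hU.isBounded
  by_cases hcl : IsClosed U
  · rw [eulerChar_of_isClosed hcl, indicator_of_mem (hcl.csInf_mem hU.nonempty hbdd.bddBelow),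
      indicator_of_mem (hcl.csSup_mem hU.nonempty hbdd.bddAbove)]
    simp
  -- a relatively open cell with two points is an open interval
  have hro := hU.isClosed_or_isRelOpen.resolve_left hcl
  have htop : affineSpan ℝ U = ⊤ :=
    eq_top_iff.2 <| (isOpen_Ioo.affineSpan_eq_top (nonempty_Ioo.2 hlt)).ge.trans
      (affineSpan_mono ℝ hU.Ioo_subset)
  have hball := isRelOpen_iff_dist.1 hro
  simp only [htop, AffineSubspace.mem_top, true_implies] at hball
  have hinf : sInf U ∉ U := fun h => by
    obtain ⟨ε, hε, hε'⟩ := hball _ h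
    have := csInf_le hbdd.bddBelow (hε' (sInf U - ε / 2) (by simp [abs_of_pos hε]; linarith))
    linarith
  have hsup : sSup U ∉ U := fun h => by
    obtain ⟨ε, hε, hε'⟩ := hball _ h
    have := le_csSup hbdd.bddAbove (hε' (sSup U + ε / 2) (by simp [abs_of_pos hε]; linarith))
    linarith
  rw [hU.eulerChar_of_isRelOpen hro, ← direction_affineSpan, htop, AffineSubspace.direction_top,
    finrank_top, finrank_self, indicator_of_notMem hinf, indicator_of_notMem hsup]
  simp

theorem IsConvexCell.sum_indicator_sub_indicator_Ico (hU : IsConvexCell U) {T : Finset ℝ}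
    (hT : {sInf U, sSup U} ⊆ T) :
    ∑ t ∈ T, (U.indicator 1 t - (Ico (sInf U) (sSup U)).indicator 1 t) = eulerChar U := by
  have hzero : ∀ t ∉ ({sInf U, sSup U} : Finset ℝ),
      U.indicator (1 : ℝ → ℤ) t - (Ico (sInf U) (sSup U)).indicator 1 t = 0 := by
    intro t ht
    simp only [Finset.mem_insert, Finset.mem_singleton, not_or] at ht
    by_cases hmem : t ∈ Ioo (sInf U) (sSup U)
    · rw [indicator_of_mem (hU.Ioo_subset hmem), indicator_of_mem (Ioo_subset_Ico_self hmem),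
        sub_self]
    · have hU' : t ∉ U := fun h => hmem ⟨(hU.subset_Icc h).1.lt_of_ne' ht.1,
        (hU.subset_Icc h).2.lt_of_ne ht.2⟩
      rw [indicator_of_notMem hU', indicator_of_notMem fun h => hmem ⟨h.1.lt_of_ne' ht.1, h.2⟩,
        sub_self]
  rw [← Finset.sum_subset hT fun t _ ht => hzero t ht]
  rcases (csInf_le_csSup hU.nonempty hU.isBounded.bddBelow hU.isBounded.bddAbove).eq_or_lt
    with heq | hlt
  · have hsub : U ⊆ {sInf U} := by simpa [← heq] using hU.subset_Icc
    have hmem : sInf U ∈ U := by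
      obtain ⟨u, hu⟩ := hU.nonempty
      rwa [← mem_singleton_iff.1 (hsub hu)]
    rw [← heq, Finset.pair_eq_singleton, Finset.sum_singleton, Ico_self, indicator_empty,
      indicator_of_mem hmem, eulerChar_of_isClosed (subsingleton_singleton.anti hsub).isClosed]
    simp
  · rw [Finset.sum_pair hlt.ne, hU.eulerChar_eq_of_lt hlt,
      indicator_of_mem (left_mem_Ico.2 hlt), indicator_of_notMem right_notMem_Ico, Pi.one_apply]
    ring

theorem eulerCharRespectsRelations_real : EulerCharRespectsRelations.{v} ℝ := by
  intro ι A U c hU hrel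
  classical
  -- `(Ico (sInf U) (sSup U)).indicator 1` is the right limit of `U.indicator 1`
  have hright : ∀ t, ∑ i ∈ A, c i * (Ico (sInf (U i)) (sSup (U i))).indicator 1 t = 0 := by
    intro t
    obtain ⟨s, hs⟩ := ((Filter.eventually_all_finset A).2 fun i hi =>
      (hU i hi).eventually_indicator_eq t).exists
    rw [← hrel s]
    exact Finset.sum_congr rfl fun i hi => by rw [hs i hi]
  set T := A.image (fun i => sInf (U i)) ∪ A.image (fun i => sSup (U i))
  have hT : ∀ i ∈ A, {sInf (U i), sSup (U i)} ⊆ T := fun i hi => by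
    simp only [Finset.insert_subset_iff, Finset.singleton_subset_iff, T, Finset.mem_union]
    exact ⟨Or.inl (Finset.mem_image_of_mem _ hi), Or.inr (Finset.mem_image_of_mem _ hi)⟩
  calc ∑ i ∈ A, c i * eulerChar (U i)
      = ∑ t ∈ T, (∑ i ∈ A, c i * (U i).indicator 1 t -
          ∑ i ∈ A, c i * (Ico (sInf (U i)) (sSup (U i))).indicator 1 t) := by
        simp_rw [← Finset.sum_sub_distrib, ← mul_sub]
        rw [Finset.sum_comm]
        refine Finset.sum_congr rfl fun i hi => ?_
        rw [← Finset.mul_sum, (hU i hi).sum_indicator_sub_indicator_Ico (hT i hi)]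
    _ = 0 := by simp [hrel, hright]

end Line

section Valuation

universe v

variable {E E' F : Type*} [NormedAddCommGroup E] [NormedSpace ℝ E]
  [NormedAddCommGroup E'] [NormedSpace ℝ E'] [NormedAddCommGroup F] [NormedSpace ℝ F]

theorem eulerCharRespectsRelations_of_subsingleton [Subsingleton E] :
    EulerCharRespectsRelations.{v} E := by
  intro ι A U c hU hrel
  rw [← hrel 0]
  refine Finset.sum_congr rfl fun i hi => ?_
  obtain ⟨x, hx⟩ := (hU i hi).nonempty
  rw [eulerChar_of_isClosed (subsingleton_of_subsingleton.isClosed),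
    indicator_of_mem (Subsingleton.elim x 0 ▸ hx), Pi.one_apply]

theorem EulerCharRespectsRelations.of_continuousLinearEquiv [FiniteDimensional ℝ E]
    (h : EulerCharRespectsRelations.{v} E') (e : E ≃L[ℝ] E') :
    EulerCharRespectsRelations.{v} E := by
  intro ι A U c hU hrel
  have := h _ A (fun i => e '' U i) c (fun i hi => (hU i hi).image_linearMap (e : E →ₗ[ℝ] E'))
    fun y => by
      rw [← hrel (e.symm y)]
      refine Finset.sum_congr rfl fun i _ => ?_
      rw [e.image_eq_preimage_symm]
      rfl
  simpa only [eulerChar_image_continuousLinearEquiv] using this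

theorem Submodule.finrank_map_fst_add_finrank_comap_inr {K M N : Type*} [DivisionRing K]
    [AddCommGroup M] [Module K M] [AddCommGroup N] [Module K N] (V : Submodule K (M × N))
    [FiniteDimensional K V] :
    finrank K (V.map (LinearMap.fst K M N)) + finrank K (V.comap (LinearMap.inr K M N)) =
      finrank K V := by
  have hker : finrank K (LinearMap.ker ((LinearMap.fst K M N).domRestrict V)) =
      finrank K (V.comap (LinearMap.inr K M N)) := by
    rw [← Submodule.finrank_map_subtype_eq, LinearMap.ker_domRestrict,
      Submodule.map_comap_subtype, LinearMap.ker_fst, inf_comm, ← Submodule.map_comap_eq]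
    exact (Submodule.equivMapOfInjective _ LinearMap.inr_injective _).finrank_eq.symm
  rw [← hker, ← LinearMap.range_domRestrict]
  exact LinearMap.finrank_range_add_finrank_ker _

def verticalLine (x : F) : ℝ →ᵃ[ℝ] F × ℝ where
  toFun t := (x, t)
  linear := LinearMap.inr ℝ F ℝ
  map_vadd' _ _ := by simp

theorem IsConvexCell.preimage_verticalLine [FiniteDimensional ℝ F] {W : Set (F × ℝ)}
    (hW : IsConvexCell W) {x : F} (hx : x ∈ Prod.fst '' W) :
    IsConvexCell (verticalLine x ⁻¹' W) where
  nonempty := by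
    obtain ⟨p, hp, rfl⟩ := hx
    exact ⟨p.2, hp⟩
  convex := hW.convex.affine_preimage _
  isBounded := ((ContinuousLinearMap.snd ℝ F ℝ).lipschitz.isBounded_image hW.isBounded).subset
    fun t ht => ⟨(x, t), ht, rfl⟩
  isClosed_or_isRelOpen := hW.isClosed_or_isRelOpen.imp
    (fun hcl => hcl.preimage (verticalLine x).continuous_of_finiteDimensional)
    (fun hro => hro.preimage _)

theorem IsConvexCell.eulerChar_eq_mul [FiniteDimensional ℝ F] {W : Set (F × ℝ)}
    (hW : IsConvexCell W) {x : F} (hx : x ∈ Prod.fst '' W) :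
    eulerChar W = eulerChar (Prod.fst '' W) * eulerChar (verticalLine x ⁻¹' W) := by
  have himage : Prod.fst '' W = LinearMap.fst ℝ F ℝ '' W := rfl
  by_cases hcl : IsClosed W
  · rw [eulerChar_of_isClosed hcl, eulerChar_of_isClosed (hcl.preimage
      (verticalLine x).continuous_of_finiteDimensional), himage,
      eulerChar_of_isClosed (hcl.image_linearMap_of_isBounded hW.isBounded _), mul_one]
  have hro := hW.isClosed_or_isRelOpen.resolve_left hcl
  have hslice := hro.vectorSpan_preimage (verticalLine x) (hW.preimage_verticalLine hx).nonempty
  have hfst : vectorSpan ℝ (Prod.fst '' W) = (vectorSpan ℝ W).map (LinearMap.fst ℝ F ℝ) := by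
    simpa using ((LinearMap.fst ℝ F ℝ).toAffineMap.map_vectorSpan (s := W)).symm
  rw [hW.eulerChar_of_isRelOpen hro, himage,
    (hW.image_linearMap _).eulerChar_of_isRelOpen (hro.image_linearMap _),
    (hW.preimage_verticalLine hx).eulerChar_of_isRelOpen (hro.preimage _), ← himage, hfst, hslice,
    ← pow_add]
  exact congrArg _ (Submodule.finrank_map_fst_add_finrank_comap_inr _).symm

theorem EulerCharRespectsRelations.prod [FiniteDimensional ℝ F]
    (hF : EulerCharRespectsRelations.{v} F) : EulerCharRespectsRelations.{v} (F × ℝ) := by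
  intro ι A W c hW hrel
  classical
  -- on the line over `x`, the relation restricts to one between the slices of the `W i`
  have hslices : ∀ x, ∑ i ∈ A, c i * eulerChar (W i) * eulerChar (Prod.fst '' W i) *
      (Prod.fst '' W i).indicator 1 x = 0 := by
    intro x
    have hcells : ∀ i ∈ A.filter (x ∈ Prod.fst '' W ·), IsConvexCell (verticalLine x ⁻¹' W i) :=
      fun i hi =>
        (hW i (Finset.mem_filter.1 hi).1).preimage_verticalLine (Finset.mem_filter.1 hi).2
    have := eulerCharRespectsRelations_real _ _ _ c hcells fun t => by
      rw [Finset.sum_filter_of_ne fun i _ hi => ?_]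
      · exact hrel (x, t)
      · by_contra hx
        exact hi (by rw [indicator_of_notMem (s := verticalLine x ⁻¹' W i)
          fun h => hx ⟨(x, t), h, rfl⟩, mul_zero])
    rw [Finset.sum_filter] at this
    rw [← this]
    refine Finset.sum_congr rfl fun i hi => ?_
    split_ifs with hx
    · rw [indicator_of_mem hx, Pi.one_apply, mul_one, (hW i hi).eulerChar_eq_mul hx]
      linear_combination c i * eulerChar (verticalLine x ⁻¹' W i) *
        eulerChar_mul_self (Prod.fst '' W i)
    · rw [indicator_of_notMem hx, mul_zero]
  have := hF _ A (fun i => Prod.fst '' W i) _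
    (fun i hi => (hW i hi).image_linearMap (LinearMap.fst ℝ F ℝ)) hslices
  rw [← this]
  refine Finset.sum_congr rfl fun i _ => ?_
  linear_combination -c i * eulerChar (W i) * eulerChar_mul_self (Prod.fst '' W i)

theorem eulerCharRespectsRelations [FiniteDimensional ℝ E] :
    EulerCharRespectsRelations.{v} E := by
  suffices h : ∀ n, EulerCharRespectsRelations.{v} (Fin n → ℝ) from
    EulerCharRespectsRelations.of_continuousLinearEquiv (h (finrank ℝ E))
      (ContinuousLinearEquiv.ofFinrankEq (by simp))
  intro n
  induction n with
  | zero => exact eulerCharRespectsRelations_of_subsingleton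
  | succ n ih =>
    exact EulerCharRespectsRelations.of_continuousLinearEquiv ih.prod
      (ContinuousLinearEquiv.ofFinrankEq (by simp))

theorem IsConvexCell.eulerChar_eq_sum [FiniteDimensional ℝ E] {V : Set E} (hV : IsConvexCell V)
    {ι : Type*} {A : Finset ι} {U : ι → Set E} (hU : ∀ i ∈ A, IsConvexCell (U i))
    (h : ∀ x, V.indicator (1 : E → ℤ) x = ∑ i ∈ A, (U i).indicator 1 x) :
    eulerChar V = ∑ i ∈ A, eulerChar (U i) := by
  have := eulerCharRespectsRelations _ (Finset.insertNone A) (fun o => o.elim V U)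
    (fun o => o.elim (-1) fun _ => 1) (by simpa [Finset.insertNone] using ⟨hV, hU⟩)
    fun x => by simp [Finset.sum_insertNone, h]
  simp only [Finset.sum_insertNone, Option.elim_none, Option.elim_some, one_mul] at this
  linarith

end Valuation

section Faces

variable {E : Type*} [NormedAddCommGroup E] [NormedSpace ℝ E] {s : Set E}

theorem ContinuousLinearMap.toExposed_convexHull (l : E →L[ℝ] ℝ) (hs : s.Finite) :
    l.toExposed (convexHull ℝ s) = convexHull ℝ (l.toExposed s) := by
  have hB : IsExposed ℝ (convexHull ℝ s) (l.toExposed (convexHull ℝ s)) :=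
    ContinuousLinearMap.toExposed.isExposed
  have hconv := hB.convex (convex_convexHull ℝ s)
  refine Subset.antisymm ?_ (convexHull_min ?_ hconv)
  · -- Krein–Milman: the face is the closed convex hull of its extreme points, which lie in `s`
    rw [← closure_convexHull_extremePoints (hB.isCompact (hs.isCompact_convexHull ℝ)) hconv]
    refine closure_minimal (convexHull_mono fun x hx => ?_)
      ((hs.subset fun x hx => hx.1).isCompact_convexHull ℝ).isClosed
    exact ⟨extremePoints_convexHull_subset (hB.isExtreme.extremePoints_subset_extremePoints hx),
      fun y hy => (extremePoints_subset hx).2 y (subset_convexHull ℝ s hy)⟩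
  · rintro x ⟨hxs, hmax⟩
    exact ⟨subset_convexHull ℝ s hxs, fun y hy =>
      convexHull_min hmax (convex_halfSpace_le l.toLinearMap.isLinear (l x)) hy⟩

theorem Set.Finite.finite_isExposed_convexHull (hs : s.Finite) :
    {F | IsExposed ℝ (convexHull ℝ s) F}.Finite := by
  refine (hs.finite_subsets.image (convexHull ℝ)).subset fun F hF => ?_
  rcases F.eq_empty_or_nonempty with rfl | hne
  · exact ⟨∅, empty_subset _, convexHull_empty⟩
  obtain ⟨l, rfl⟩ := hF hne
  exact ⟨l.toExposed s, fun x hx => hx.1, (l.toExposed_convexHull hs).symm⟩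

theorem eventually_add_mul_le_add_mul_iff (a b a' b' : ℝ) :
    ∀ᶠ ε in 𝓝[>] (0 : ℝ), (a + ε * b ≤ a' + ε * b' ↔ a < a' ∨ a = a' ∧ b ≤ b') := by
  have hcont : Continuous fun ε : ℝ => a' + ε * b' - (a + ε * b) := by fun_prop
  rcases lt_trichotomy a a' with h | rfl | h
  · filter_upwards [((hcont.tendsto 0).eventually (lt_mem_nhds (a := 0) (by simpa))).filter_mono
      nhdsWithin_le_nhds] with ε hε
    exact iff_of_true (by linarith) (Or.inl h)
  · filter_upwards [self_mem_nhdsWithin] with ε (hε : 0 < ε)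
    simp [hε]
  · filter_upwards [((hcont.tendsto 0).eventually (gt_mem_nhds (a := 0) (by simpa))).filter_mono
      nhdsWithin_le_nhds] with ε hε
    exact iff_of_false (by linarith) (by rintro (h' | ⟨h', -⟩) <;> linarith)

theorem ContinuousLinearMap.eventually_toExposed_add_smul (l g : E →L[ℝ] ℝ) (hs : s.Finite) :
    ∀ᶠ ε in 𝓝[>] (0 : ℝ), (l + ε • g).toExposed s = g.toExposed (l.toExposed s) := by
  -- for small `ε > 0`, `l + ε • g` orders the finitely many points of `s` lexicographically
  filter_upwards [(Filter.eventually_all_finite hs).2 fun x _ =>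
    (Filter.eventually_all_finite hs).2 fun y _ =>
      eventually_add_mul_le_add_mul_iff (l y) (g y) (l x) (g x)] with ε hε
  ext x
  simp only [ContinuousLinearMap.toExposed, add_apply, smul_apply, smul_eq_mul, mem_ofPred_eq]
  constructor
  · rintro ⟨hx, hmax⟩
    have hl : ∀ y ∈ s, l y ≤ l x := fun y hy =>
      ((hε x hx y hy).1 (hmax y hy)).elim le_of_lt fun h => h.1.le
    exact ⟨⟨hx, hl⟩, fun y ⟨hy, hymax⟩ => ((hε x hx y hy).1 (hmax y hy)).elim
      (fun h => absurd (hymax x hx) (not_le.2 h)) fun h => h.2⟩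
  · rintro ⟨⟨hx, hl⟩, hg⟩
    refine ⟨hx, fun y hy => (hε x hx y hy).2 ?_⟩
    rcases (hl y hy).lt_or_eq with h | h
    · exact Or.inl h
    · exact Or.inr ⟨h, hg y ⟨hy, fun z hz => h ▸ hl z hz⟩⟩

theorem IsExposed.trans_convexHull (hs : s.Finite) {F G : Set E}
    (hF : IsExposed ℝ (convexHull ℝ s) F) (hG : IsExposed ℝ F G) :
    IsExposed ℝ (convexHull ℝ s) G := by
  intro hGne
  obtain ⟨g, rfl⟩ := hG hGne
  obtain ⟨l, rfl⟩ := hF (hGne.mono fun x hx => hx.1)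
  obtain ⟨ε, hε⟩ := (l.eventually_toExposed_add_smul g hs).exists
  refine ⟨l + ε • g, ?_⟩
  change g.toExposed (l.toExposed (convexHull ℝ s)) = (l + ε • g).toExposed (convexHull ℝ s)
  rw [l.toExposed_convexHull hs, g.toExposed_convexHull (hs.subset fun x hx => hx.1), ← hε,
    (l + ε • g).toExposed_convexHull hs]

theorem Convex.exists_toExposed_ne_of_notMem_intrinsicInterior [FiniteDimensional ℝ E]
    {F : Set E} (hF : Convex ℝ F) {x : E} (hx : x ∈ F) (hxF : x ∉ intrinsicInterior ℝ F) :
    ∃ l : E →L[ℝ] ℝ, x ∈ l.toExposed F ∧ l.toExposed F ≠ F := by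
  obtain ⟨z, hz⟩ := Set.Nonempty.intrinsicInterior hF ⟨x, hx⟩
  -- separate `x` from the relative interior, within the direction of the affine span
  set V := vectorSpan ℝ F
  set D : Set V := {v | (v : E) + z ∈ intrinsicInterior ℝ F}
  have hDconv : Convex ℝ D :=
    (hF.intrinsicInterior.translate_preimage_left z).linear_preimage V.subtype
  have hDopen : IsOpen D := by
    rw [Metric.isOpen_iff]
    intro v hv
    obtain ⟨ε, hε, hball⟩ := isRelOpen_iff_dist.1 hF.isRelOpen_intrinsicInterior _ hv
    refine ⟨ε, hε, fun w hw => hball _ ?_ (by simpa [dist_eq_norm] using hw)⟩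
    rw [hF.affineSpan_intrinsicInterior ⟨z, hz⟩]
    exact AffineSubspace.vadd_mem_of_mem_direction (by rw [direction_affineSpan]; exact w.2)
      (subset_affineSpan ℝ F (intrinsicInterior_subset hz))
  have hxV : x - z ∈ V := vsub_mem_vectorSpan ℝ hx (intrinsicInterior_subset hz)
  obtain ⟨f, hf⟩ := geometric_hahn_banach_open_point hDconv hDopen (x := ⟨x - z, hxV⟩)
    (by simpa [D] using hxF)
  obtain ⟨l, hl, -⟩ := exists_extension_norm_eq V f
  have hlt : ∀ y ∈ intrinsicInterior ℝ F, l y < l x := fun y hy => by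
    have hyV : y - z ∈ V :=
      vsub_mem_vectorSpan ℝ (intrinsicInterior_subset hy) (intrinsicInterior_subset hz)
    have := hf ⟨y - z, hyV⟩ (by simpa [D] using hy)
    rw [← hl, ← hl] at this
    simpa using this
  have hle : ∀ y ∈ F, l y ≤ l x := fun y hy =>
    closure_minimal (fun w hw => (hlt w hw).le) (isClosed_le l.continuous continuous_const)
      (hF.subset_closure_intrinsicInterior ⟨z, hz⟩ hy)
  refine ⟨l, ⟨hx, hle⟩, fun h => (hlt z hz).not_ge ?_⟩
  have hzl : z ∈ l.toExposed F := by
    rw [h]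
    exact intrinsicInterior_subset hz
  exact hzl.2 x hx

theorem IsExtreme.subset_of_mem_intrinsicInterior {A B F : Set E} (hB : IsExtreme ℝ A B)
    (hFA : F ⊆ A) {x : E} (hxF : x ∈ intrinsicInterior ℝ F) (hxB : x ∈ B) : F ⊆ B := by
  obtain ⟨-, ε, hε, hball⟩ := mem_intrinsicInterior_iff_dist.1 hxF
  intro y hy
  -- prolong the segment from `y` through `x` slightly beyond `x`
  have hlim : Tendsto (AffineMap.lineMap y x) (𝓝[>] (1 : ℝ)) (𝓝 x) := by
    simpa using ((AffineMap.lineMap_continuous (R := ℝ) (p := y) (q := x)).tendsto 1).mono_left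
      nhdsWithin_le_nhds
  obtain ⟨r, hr, hr1 : 1 < r⟩ :=
    ((hlim.eventually (ball_mem_nhds x hε)).and self_mem_nhdsWithin).exists
  have hw : AffineMap.lineMap y x r ∈ F := hball _ (AffineMap.lineMap_mem _
    (subset_affineSpan ℝ F hy) (subset_affineSpan ℝ F (intrinsicInterior_subset hxF))) hr
  have hseg : x ∈ openSegment ℝ y (AffineMap.lineMap y x r) := by
    rw [openSegment_eq_image_lineMap]
    refine ⟨r⁻¹, ⟨inv_pos.2 (zero_lt_one.trans hr1), inv_lt_one_of_one_lt₀ hr1⟩, ?_⟩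
    rw [AffineMap.lineMap_lineMap_right, inv_mul_cancel₀ (zero_lt_one.trans hr1).ne',
      AffineMap.lineMap_apply_one]
  exact hB.left_mem_of_mem_openSegment (hFA hy) (hFA hw) hxB hseg

theorem existsUnique_isExposed_mem_intrinsicInterior [FiniteDimensional ℝ E] (hs : s.Finite)
    {x : E} (hx : x ∈ convexHull ℝ s) :
    ∃! F, IsExposed ℝ (convexHull ℝ s) F ∧ x ∈ intrinsicInterior ℝ F := by
  have hfin : {F | IsExposed ℝ (convexHull ℝ s) F ∧ x ∈ F}.Finite :=
    hs.finite_isExposed_convexHull.subset fun F hF => hF.1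
  obtain ⟨F, ⟨hF, hxF⟩, hmin⟩ := hfin.exists_minimal ⟨_, IsExposed.refl _, hx⟩
  have hxF' : x ∈ intrinsicInterior ℝ F := by
    by_contra hxF'
    obtain ⟨l, hxl, hne⟩ :=
      (hF.convex (convex_convexHull ℝ s)).exists_toExposed_ne_of_notMem_intrinsicInterior hxF hxF'
    exact hne (Subset.antisymm (fun y hy => hy.1) (hmin
      ⟨hF.trans_convexHull hs ContinuousLinearMap.toExposed.isExposed, hxl⟩ fun y hy => hy.1))
  refine ⟨F, ⟨hF, hxF'⟩, fun G ⟨hG, hxG⟩ => Subset.antisymm ?_ ?_⟩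
  · exact hF.isExtreme.subset_of_mem_intrinsicInterior hG.subset hxG hxF
  · exact hG.isExtreme.subset_of_mem_intrinsicInterior hF.subset hxF'
      (intrinsicInterior_subset hxG)

end Faces

section EulerRelation

variable {E : Type*} [NormedAddCommGroup E] [NormedSpace ℝ E] [FiniteDimensional ℝ E]
  {s : Set E} {Φ : Finset (Set E)}

theorem indicator_convexHull_eq_sum_indicator_intrinsicInterior (hs : s.Finite)
    (hΦ : ∀ F, F ∈ Φ ↔ IsExposed ℝ (convexHull ℝ s) F ∧ F.Nonempty) (x : E) :
    (convexHull ℝ s).indicator (1 : E → ℤ) x =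
      ∑ F ∈ Φ, (intrinsicInterior ℝ F).indicator 1 x := by
  by_cases hx : x ∈ convexHull ℝ s
  · obtain ⟨F, ⟨hF, hxF⟩, huniq⟩ := existsUnique_isExposed_mem_intrinsicInterior hs hx
    rw [indicator_of_mem hx, Finset.sum_eq_single_of_mem F
      ((hΦ F).2 ⟨hF, x, intrinsicInterior_subset hxF⟩) fun G hG hGF => ?_, indicator_of_mem hxF]
    exact indicator_of_notMem (fun hxG => hGF (huniq G ⟨((hΦ G).1 hG).1, hxG⟩)) _
  · rw [indicator_of_notMem hx, Finset.sum_eq_zero fun F hF => indicator_of_notMem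
      (fun h => hx (((hΦ F).1 hF).1.subset (intrinsicInterior_subset h))) _]

theorem sum_neg_one_pow_finrank_faces_eq_one (hs : s.Finite) (hne : s.Nonempty)
    (hΦ : ∀ F, F ∈ Φ ↔ IsExposed ℝ (convexHull ℝ s) F ∧ F.Nonempty) :
    ∑ F ∈ Φ, (-1 : ℤ) ^ finrank ℝ (vectorSpan ℝ F) = 1 := by
  have hPcpt := hs.isCompact_convexHull ℝ
  have hP : IsConvexCell (convexHull ℝ s) :=
    ⟨hne.convexHull, convex_convexHull ℝ s, hPcpt.isBounded, Or.inl hPcpt.isClosed⟩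
  have hfaces : ∀ F ∈ Φ, IsConvexCell (intrinsicInterior ℝ F) ∧
      eulerChar (intrinsicInterior ℝ F) = (-1) ^ finrank ℝ (vectorSpan ℝ F) := by
    intro F hF
    obtain ⟨hexp, hFne⟩ := (hΦ F).1 hF
    have hconv := hexp.convex (convex_convexHull ℝ s)
    have hrel := Set.Nonempty.intrinsicInterior hconv hFne
    have hcell : IsConvexCell (intrinsicInterior ℝ F) :=
      ⟨hrel, hconv.intrinsicInterior, hPcpt.isBounded.subset (intrinsicInterior_subset.trans
        hexp.subset), Or.inr hconv.isRelOpen_intrinsicInterior⟩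
    refine ⟨hcell, ?_⟩
    rw [hcell.eulerChar_of_isRelOpen hconv.isRelOpen_intrinsicInterior, ← direction_affineSpan,
      hconv.affineSpan_intrinsicInterior hrel, direction_affineSpan]
  calc ∑ F ∈ Φ, (-1 : ℤ) ^ finrank ℝ (vectorSpan ℝ F)
      = ∑ F ∈ Φ, eulerChar (intrinsicInterior ℝ F) :=
        Finset.sum_congr rfl fun F hF => (hfaces F hF).2.symm
    _ = eulerChar (convexHull ℝ s) := (hP.eulerChar_eq_sum (fun F hF => (hfaces F hF).1)
        (indicator_convexHull_eq_sum_indicator_intrinsicInterior hs hΦ)).symm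
    _ = 1 := eulerChar_of_isClosed hPcpt.isClosed

end EulerRelation

open Finset in
theorem Finset.sum_neg_one_pow_eq_card_sub_card {α : Type*} (T : Finset α) (d : α → ℕ) :
    ∑ a ∈ T, (-1 : ℤ) ^ d a = #{a ∈ T | Even (d a)} - #{a ∈ T | ¬Even (d a)} := by
  rw [← Finset.sum_filter_add_sum_filter_not T fun a => Even (d a),
    Finset.sum_congr rfl fun a ha => (Finset.mem_filter.1 ha).2.neg_one_pow,
    Finset.sum_congr rfl fun a ha =>
      (Nat.not_even_iff_odd.1 (Finset.mem_filter.1 ha).2).neg_one_pow]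
  simp [sub_eq_add_neg]

open Finset in
theorem Nat.card_subtype_and_eq_card_filter {α : Type*} {p q : α → Prop} [DecidablePred q]
    (hp : {a | p a}.Finite) : Nat.card {a // p a ∧ q a} = #{a ∈ hp.toFinset | q a} := by
  have hpq : {a | p a ∧ q a} = ↑{a ∈ hp.toFinset | q a} := by
    ext a
    simp
  calc Nat.card {a // p a ∧ q a} = Nat.card {a | p a ∧ q a} := rfl
    _ = #{a ∈ hp.toFinset | q a} := by rw [hpq, Nat.card_coe_set_eq, Set.ncard_coe_finset]

theorem euler_relation_general (n : ℕ) (S : Finset (EuclideanSpace ℝ (Fin n)))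
    (P : Set (EuclideanSpace ℝ (Fin n))) (hP : P = convexHull ℝ (S : Set (EuclideanSpace ℝ (Fin n))))
    (hPne : P.Nonempty) :
    Nat.card {F : Set (EuclideanSpace ℝ (Fin n)) //
        IsExposed ℝ P F ∧ F.Nonempty ∧ Even (Module.finrank ℝ (vectorSpan ℝ F))} =
    Nat.card {F : Set (EuclideanSpace ℝ (Fin n)) //
        IsExposed ℝ P F ∧ F.Nonempty ∧ ¬ Even (Module.finrank ℝ (vectorSpan ℝ F))} + 1 := by
  classical
  subst hP
  have hfaces : {F | IsExposed ℝ (convexHull ℝ (S : Set _)) F ∧ F.Nonempty}.Finite :=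
    S.finite_toSet.finite_isExposed_convexHull.subset fun _ => And.left
  have heuler := sum_neg_one_pow_finrank_faces_eq_one S.finite_toSet
    (convexHull_nonempty_iff.1 hPne) fun F => hfaces.mem_toFinset
  rw [Finset.sum_neg_one_pow_eq_card_sub_card] at heuler
  simp only [← and_assoc, Nat.card_subtype_and_eq_card_filter hfaces]
  omega

/-- Euler's relation: for a `d`-polytope `P` (convex hull of a finite set), the number of
faces of even dimension equals the number of faces of odd dimension, where faces are the
exposed faces (including `P` itself) and the empty face (of dimension `-1`, counted on the
odd side as the extra `+ 1`). -/
theorem euler_relation (d n : ℕ) (S : Finset (EuclideanSpace ℝ (Fin n)))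
    (P : Set (EuclideanSpace ℝ (Fin n))) (hP : P = convexHull ℝ (S : Set (EuclideanSpace ℝ (Fin n))))
    (hPne : P.Nonempty)
    (hd : Module.finrank ℝ (vectorSpan ℝ P) = d) :
    Nat.card {F : Set (EuclideanSpace ℝ (Fin n)) //
        IsExposed ℝ P F ∧ F.Nonempty ∧ Even (Module.finrank ℝ (vectorSpan ℝ F))} =
    Nat.card {F : Set (EuclideanSpace ℝ (Fin n)) //
        IsExposed ℝ P F ∧ F.Nonempty ∧ ¬ Even (Module.finrank ℝ (vectorSpan ℝ F))} + 1 :=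
  euler_relation_general n S P hP hPne
end

section
/- For any positive integer m and any nonnegative integer n, with l^m(C_k) the reversed m-modular face vector of the cyclic polytope C_k = C(k+1+n, k) given by l^m(C_k) = e_1 (I + Q·Σ_{j=0}^{k} h_j A^j) where A = I+Q, Q is the m×m cyclic shift, and h_j = h_j(C_k) as in McMullen's formula, the normalized vectors l^m(C_k)/σ(l^m(C_k)) converge to (1/m, ..., 1/m) as k → ∞, where σ denotes the sum of coordinates. -/
open Matrix

/-- The `m × m` cyclic shift permutation matrix: entry `1` at `(i, i+1 mod m)`. -/
def cyclicShift (m : ℕ) : Matrix (Fin m) (Fin m) ℝ :=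
  Matrix.of fun i j => if (j : ℕ) = ((i : ℕ) + 1) % m then 1 else 0

/-- The unit vector `e₁ = (1, 0, …, 0)`. -/
def e1 (m : ℕ) : Fin m → ℝ := fun i => if (i : ℕ) = 0 then 1 else 0

/-- The `h`-vector of the cyclic polytope `C(k+1+n, k)`:
`h_j = C(n+j, j)` for `j ≤ ⌊k/2⌋` and `h_j = h_{k−j}` for `⌊k/2⌋ < j ≤ k`. -/
def hcyc (n k j : ℕ) : ℕ :=
  if j ≤ k / 2 then (n + j).choose j else (n + (k - j)).choose (k - j)

/-- The reversed `m`-modular face vector of the cyclic polytope `C(k+1+n, k)`: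
`l^m(C_k) = e₁ (I + Q·Σ_{j=0}^{k} h_j A^j)` with `A = I + Q`. -/
noncomputable def lmC (m n k : ℕ) : Fin m → ℝ :=
  e1 m ᵥ* ((1 : Matrix (Fin m) (Fin m) ℝ)
    + cyclicShift m * ∑ j ∈ Finset.range (k + 1),
        (hcyc n k j : ℝ) • ((1 : Matrix (Fin m) (Fin m) ℝ) + cyclicShift m) ^ j)

open Finset Filter Topology Fin.CommRing

/-!
Put `L = (I + Q) / 2`, the transition matrix of the lazy random walk on `ℤ/m`. Then
`l^m(C_k)_i = (e₁)_i + Σ_{j ≤ k} h_j 2^j (e₁ L^j)_{i-1}` and `σ(l^m(C_k)) = 1 + Σ_{j ≤ k} h_j 2^j`,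
so up to an `O(2^{-k})` error the normalized vector is the average of the distributions `e₁ L^j`
with weights `p_{k,j} ∝ h_j 2^j`.

The distributions `e₁ L^j` become uniform: `t ≥ m` steps of the walk reach every residue with
probability at least `2^{-t}`, so `m` steps shrink the spread `max - min` by the factor
`1 - 2^{1-m}`. The symmetry `h_j = h_{k-j}` gives `h_j 2^j ≤ 4^j 2^{-k} Σ_i h_i 2^i`, so every
single weight `p_{k,j}` tends to `0`, and the Silverman–Toeplitz argument carries the limit of
the distributions over to their averages.
-/

lemma sum_mul_le_sub_mul {σ : Type*} {s : Finset σ} {c y : σ → ℝ} {M : ℝ}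
    (hc : ∀ a ∈ s, 0 ≤ c a) (hc1 : ∑ a ∈ s, c a = 1) (hy : ∀ a ∈ s, y a ≤ M)
    {t : σ} (ht : t ∈ s) :
    ∑ a ∈ s, c a * y a ≤ M - c t * (M - y t) := by
  have hsplit : ∑ a ∈ s, c a * y a = M - ∑ a ∈ s, c a * (M - y a) := by
    simp only [mul_sub, sum_sub_distrib, ← sum_mul, hc1, one_mul, sub_sub_cancel]
  rw [hsplit]
  gcongr
  exact single_le_sum (fun a ha => mul_nonneg (hc a ha) (sub_nonneg.2 (hy a ha))) ht

lemma add_mul_le_sum_mul {σ : Type*} {s : Finset σ} {c y : σ → ℝ} {M : ℝ}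
    (hc : ∀ a ∈ s, 0 ≤ c a) (hc1 : ∑ a ∈ s, c a = 1) (hy : ∀ a ∈ s, M ≤ y a)
    {t : σ} (ht : t ∈ s) :
    M + c t * (y t - M) ≤ ∑ a ∈ s, c a * y a := by
  have h := sum_mul_le_sub_mul (y := fun a => -y a) (M := -M) hc hc1
    (fun a ha => neg_le_neg (hy a ha)) ht
  simp only [mul_neg, sum_neg_distrib] at h
  linarith

section Spread

variable {ι : Type*} [Fintype ι] [Nonempty ι]

noncomputable def spread (f : ι → ℝ) : ℝ :=
  univ.sup' univ_nonempty f - univ.inf' univ_nonempty f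

lemma spread_nonneg (f : ι → ℝ) : 0 ≤ spread f := by
  obtain ⟨i⟩ := ‹Nonempty ι›
  exact sub_nonneg.2 ((inf'_le f (mem_univ i)).trans (le_sup' f (mem_univ i)))

lemma spread_le_of_forall_mem_Icc {f : ι → ℝ} {lo hi : ℝ} (h : ∀ i, f i ∈ Set.Icc lo hi) :
    spread f ≤ hi - lo :=
  sub_le_sub (sup'_le _ _ fun i _ => (h i).2) (le_inf' _ _ fun i _ => (h i).1)

lemma abs_sub_mean_le_spread (f : ι → ℝ) (i : ι) :
    |f i - (∑ j, f j) / Fintype.card ι| ≤ spread f := by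
  have hcard : (0 : ℝ) < Fintype.card ι := Nat.cast_pos.2 Fintype.card_pos
  have hlo : univ.inf' univ_nonempty f ≤ (∑ j, f j) / Fintype.card ι := by
    rw [le_div_iff₀ hcard, mul_comm, ← nsmul_eq_mul]
    exact card_nsmul_le_sum _ _ _ fun j _ => inf'_le f (mem_univ j)
  have hhi : (∑ j, f j) / Fintype.card ι ≤ univ.sup' univ_nonempty f := by
    rw [div_le_iff₀ hcard, mul_comm, ← nsmul_eq_mul]
    exact sum_le_card_nsmul _ _ _ fun j _ => le_sup' f (mem_univ j)
  have := inf'_le f (mem_univ i)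
  have := le_sup' f (mem_univ i)
  rw [spread, abs_sub_le_iff]
  constructor <;> linarith

end Spread

lemma tendsto_sum_range_mul_of_tendsto_zero {p : ℕ → ℕ → ℝ} {y : ℕ → ℝ}
    (hp : ∀ k j, 0 ≤ p k j) (hp1 : ∀ k, ∑ j ∈ range (k + 1), p k j = 1)
    (hpj : ∀ j, Tendsto (fun k => p k j) atTop (𝓝 0)) (hy : Tendsto y atTop (𝓝 0)) :
    Tendsto (fun k => ∑ j ∈ range (k + 1), p k j * y j) atTop (𝓝 0) := by
  refine Metric.tendsto_nhds.2 fun ε hε => ?_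
  obtain ⟨J, hJ⟩ := eventually_atTop.1 (Metric.tendsto_nhds.1 hy (ε / 2) (half_pos hε))
  have hhead : Tendsto (fun k => ∑ j ∈ range J, p k j * |y j|) atTop (𝓝 0) := by
    simpa using tendsto_finsetSum (range J) fun j _ => (hpj j).mul_const |y j|
  filter_upwards [Metric.tendsto_nhds.1 hhead (ε / 2) (half_pos hε)] with k hk
  have hpy : ∀ j, 0 ≤ p k j * |y j| := fun j => mul_nonneg (hp k j) (abs_nonneg _)
  rw [Real.dist_0_eq_abs, abs_of_nonneg (sum_nonneg fun j _ => hpy j)] at hk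
  have hfront : ∑ j ∈ (range (k + 1)).filter (· < J), p k j * |y j|
      ≤ ∑ j ∈ range J, p k j * |y j| :=
    sum_le_sum_of_subset_of_nonneg (fun j hj => mem_range.2 (mem_filter.1 hj).2)
      fun j _ _ => hpy j
  have htail : ∑ j ∈ (range (k + 1)).filter (¬ · < J), p k j * |y j| ≤ ε / 2 :=
    calc _ ≤ ∑ j ∈ (range (k + 1)).filter (¬ · < J), p k j * (ε / 2) :=
          sum_le_sum fun j hj => mul_le_mul_of_nonneg_left
            (by simpa using (hJ j (not_lt.1 (mem_filter.1 hj).2)).le) (hp k j)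
      _ ≤ ∑ j ∈ range (k + 1), p k j * (ε / 2) :=
          sum_le_sum_of_subset_of_nonneg (filter_subset _ _)
            fun j _ _ => mul_nonneg (hp k j) (half_pos hε).le
      _ = ε / 2 := by rw [← sum_mul, hp1, one_mul]
  rw [Real.dist_0_eq_abs]
  calc |∑ j ∈ range (k + 1), p k j * y j| ≤ ∑ j ∈ range (k + 1), p k j * |y j| :=
        (abs_sum_le_sum_abs _ _).trans_eq <| sum_congr rfl fun j _ => by
          rw [abs_mul, abs_of_nonneg (hp k j)]
    _ = ∑ j ∈ (range (k + 1)).filter (· < J), p k j * |y j|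
        + ∑ j ∈ (range (k + 1)).filter (¬ · < J), p k j * |y j| :=
      (sum_filter_add_sum_filter_not _ _ _).symm
    _ < ε := by linarith

lemma tendsto_sum_range_mul_of_tendsto {p : ℕ → ℕ → ℝ} {x : ℕ → ℝ} {L : ℝ}
    (hp : ∀ k j, 0 ≤ p k j) (hp1 : ∀ k, ∑ j ∈ range (k + 1), p k j = 1)
    (hpj : ∀ j, Tendsto (fun k => p k j) atTop (𝓝 0)) (hx : Tendsto x atTop (𝓝 L)) :
    Tendsto (fun k => ∑ j ∈ range (k + 1), p k j * x j) atTop (𝓝 L) := by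
  have hsum : ∀ k, ∑ j ∈ range (k + 1), p k j * x j
      = L + ∑ j ∈ range (k + 1), p k j * (x j - L) := fun k => by
    simp only [mul_sub, sum_sub_distrib, ← sum_mul, hp1, one_mul, add_sub_cancel]
  simpa [hsum] using (tendsto_sum_range_mul_of_tendsto_zero hp hp1 hpj
    (tendsto_sub_nhds_zero_iff.2 hx)).const_add L

section CyclicWalk

variable {m : ℕ} [NeZero m]

lemma vecMul_cyclicShift_apply (v : Fin m → ℝ) (i : Fin m) :
    (v ᵥ* cyclicShift m) i = v (i - 1) := by
  have hval : ∀ a : Fin m, i = a + 1 ↔ (i : ℕ) = ((a : ℕ) + 1) % m := fun a => by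
    rw [Fin.ext_iff, Fin.val_add, Fin.val_one', Nat.add_mod_mod]
  simp only [vecMul, dotProduct, cyclicShift, of_apply, mul_ite, mul_one, mul_zero, ← hval]
  simp only [eq_comm (a := i), ← eq_sub_iff_add_eq, sum_ite_eq', mem_univ, if_true]

lemma vecMul_cyclicShift_pow_apply (v : Fin m → ℝ) (s : ℕ) (i : Fin m) :
    (v ᵥ* cyclicShift m ^ s) i = v (i - s) := by
  induction s generalizing i with
  | zero => simp
  | succ s ih =>
    rw [pow_succ, ← vecMul_vecMul, vecMul_cyclicShift_apply, ih]
    congr 1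
    push_cast
    ring

lemma vecMul_one_add_cyclicShift_pow_apply (v : Fin m → ℝ) (t : ℕ) (i : Fin m) :
    (v ᵥ* (1 + cyclicShift m) ^ t) i = ∑ s ∈ range (t + 1), (t.choose s : ℝ) * v (i - s) := by
  rw [add_comm, (Commute.one_right _).add_pow, vecMul_sum, Finset.sum_apply]
  refine sum_congr rfl fun s _ => ?_
  rw [one_pow, mul_one, ← Nat.cast_comm, ← nsmul_eq_mul, vecMul_smul, Pi.smul_apply,
    vecMul_cyclicShift_pow_apply, nsmul_eq_mul]

end CyclicWalk

noncomputable def lazyShift (m : ℕ) : Matrix (Fin m) (Fin m) ℝ :=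
  (2 : ℝ)⁻¹ • (1 + cyclicShift m)

lemma one_add_cyclicShift_pow (m j : ℕ) :
    (1 + cyclicShift m) ^ j = (2 : ℝ) ^ j • lazyShift m ^ j := by
  rw [lazyShift, smul_pow, smul_smul, ← mul_pow, mul_inv_cancel₀ two_ne_zero, one_pow, one_smul]

lemma sum_range_choose_div_two_pow (t : ℕ) :
    ∑ s ∈ range (t + 1), (t.choose s : ℝ) / 2 ^ t = 1 := by
  rw [← sum_div, ← Nat.cast_sum, Nat.sum_range_choose, Nat.cast_pow, Nat.cast_ofNat,
    div_self (pow_ne_zero _ two_ne_zero)]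

lemma inv_two_pow_le_choose_div_two_pow {s t : ℕ} (hst : s ≤ t) :
    ((2 : ℝ) ^ t)⁻¹ ≤ t.choose s / 2 ^ t := by
  rw [inv_eq_one_div]
  gcongr
  exact_mod_cast Nat.choose_pos hst

lemma one_sub_two_div_two_pow_nonneg {m : ℕ} (hm : m ≠ 0) : (0 : ℝ) ≤ 1 - 2 / 2 ^ m := by
  rw [sub_nonneg, div_le_one (by positivity)]
  exact le_self_pow₀ one_le_two hm

section LazyWalk

variable {m : ℕ} [NeZero m]

lemma vecMul_lazyShift_pow_apply (v : Fin m → ℝ) (t : ℕ) (i : Fin m) :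
    (v ᵥ* lazyShift m ^ t) i = ∑ s ∈ range (t + 1), (t.choose s : ℝ) / 2 ^ t * v (i - s) := by
  have h := vecMul_one_add_cyclicShift_pow_apply v t i
  rw [one_add_cyclicShift_pow, vecMul_smul, Pi.smul_apply, smul_eq_mul] at h
  simp_rw [div_mul_eq_mul_div]
  rw [← sum_div, ← h, mul_div_cancel_left₀ _ (pow_ne_zero t two_ne_zero)]

lemma sum_vecMul_lazyShift_pow (v : Fin m → ℝ) (t : ℕ) :
    ∑ i, (v ᵥ* lazyShift m ^ t) i = ∑ i, v i := by
  simp only [vecMul_lazyShift_pow_apply]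
  rw [sum_comm]
  have hshift : ∀ s : Fin m, ∑ i, v (i - s) = ∑ i, v i := fun s =>
    Fintype.sum_equiv (Equiv.subRight s) _ _ fun _ => rfl
  simp only [← Finset.mul_sum, hshift, ← sum_mul, sum_range_choose_div_two_pow, one_mul]

lemma vecMul_lazyShift_pow_apply_le (v : Fin m → ℝ) {s t : ℕ} (hst : s ≤ t) (i : Fin m) :
    (v ᵥ* lazyShift m ^ t) i
      ≤ univ.sup' univ_nonempty v - (2 ^ t)⁻¹ * (univ.sup' univ_nonempty v - v (i - s)) := by
  have hs : s ∈ range (t + 1) := mem_range.2 (Nat.lt_succ_of_le hst)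
  have hchoose := inv_two_pow_le_choose_div_two_pow hst
  rw [vecMul_lazyShift_pow_apply]
  refine (sum_mul_le_sub_mul (c := fun a => (t.choose a : ℝ) / 2 ^ t) (y := fun a => v (i - a))
    (M := univ.sup' univ_nonempty v) (fun a _ => by positivity) (sum_range_choose_div_two_pow t)
    (fun a _ => le_sup' v (mem_univ _)) hs).trans ?_
  gcongr
  exact sub_nonneg.2 (le_sup' v (mem_univ _))

lemma le_vecMul_lazyShift_pow_apply (v : Fin m → ℝ) {s t : ℕ} (hst : s ≤ t) (i : Fin m) :
    univ.inf' univ_nonempty v + (2 ^ t)⁻¹ * (v (i - s) - univ.inf' univ_nonempty v)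
      ≤ (v ᵥ* lazyShift m ^ t) i := by
  have hs : s ∈ range (t + 1) := mem_range.2 (Nat.lt_succ_of_le hst)
  have hchoose := inv_two_pow_le_choose_div_two_pow hst
  rw [vecMul_lazyShift_pow_apply]
  refine le_trans ?_ (add_mul_le_sum_mul (c := fun a => (t.choose a : ℝ) / 2 ^ t)
    (y := fun a => v (i - a)) (M := univ.inf' univ_nonempty v) (fun a _ => by positivity)
    (sum_range_choose_div_two_pow t) (fun a _ => inf'_le v (mem_univ _)) hs)
  gcongr
  exact sub_nonneg.2 (inf'_le v (mem_univ _))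

lemma spread_vecMul_lazyShift_pow_le (v : Fin m → ℝ) (t : ℕ) :
    spread (v ᵥ* lazyShift m ^ t) ≤ spread v := by
  refine spread_le_of_forall_mem_Icc fun i => ⟨?_, ?_⟩
  · refine le_trans (le_add_of_nonneg_right ?_) (le_vecMul_lazyShift_pow_apply v t.zero_le i)
    exact mul_nonneg (by positivity) (sub_nonneg.2 (inf'_le v (mem_univ _)))
  · refine (vecMul_lazyShift_pow_apply_le v t.zero_le i).trans (sub_le_self _ ?_)
    exact mul_nonneg (by positivity) (sub_nonneg.2 (le_sup' v (mem_univ _)))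

lemma spread_vecMul_lazyShift_pow_le_mul (v : Fin m → ℝ) {t : ℕ} (ht : m ≤ t) :
    spread (v ᵥ* lazyShift m ^ t) ≤ (1 - 2 / 2 ^ t) * spread v := by
  obtain ⟨bmin, -, hbmin⟩ := exists_mem_eq_inf' univ_nonempty v
  obtain ⟨bmax, -, hbmax⟩ := exists_mem_eq_sup' univ_nonempty v
  have hshift : ∀ i b : Fin m,
      ((i - b : Fin m) : ℕ) ≤ t ∧ i - (((i - b : Fin m) : ℕ) : Fin m) = b :=
    fun i b => ⟨((i - b).isLt.le.trans ht), by rw [Fin.cast_val_eq_self, sub_sub_cancel]⟩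
  refine (spread_le_of_forall_mem_Icc
    (lo := v bmin + (2 ^ t)⁻¹ * (v bmax - v bmin))
    (hi := v bmax - (2 ^ t)⁻¹ * (v bmax - v bmin)) fun i => ⟨?_, ?_⟩).trans_eq ?_
  · have h := le_vecMul_lazyShift_pow_apply v (hshift i bmax).1 i
    simpa only [(hshift i bmax).2, hbmax, hbmin] using h
  · have h := vecMul_lazyShift_pow_apply_le v (hshift i bmin).1 i
    simpa only [(hshift i bmin).2, hbmax, hbmin] using h
  · rw [spread, hbmax, hbmin]
    field_simp
    ring

lemma antitone_spread_vecMul_lazyShift_pow (v : Fin m → ℝ) :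
    Antitone fun j => spread (v ᵥ* lazyShift m ^ j) :=
  antitone_nat_of_succ_le fun j => by
    simpa only [pow_succ, ← vecMul_vecMul, pow_zero, vecMul_one] using
      spread_vecMul_lazyShift_pow_le (v ᵥ* lazyShift m ^ j) 1

lemma spread_vecMul_lazyShift_pow_mul_le (v : Fin m → ℝ) (q : ℕ) :
    spread (v ᵥ* lazyShift m ^ (m * q)) ≤ (1 - 2 / 2 ^ m) ^ q * spread v := by
  induction q with
  | zero => simp
  | succ q ih =>
    rw [Nat.mul_succ, pow_add, ← vecMul_vecMul, pow_succ, mul_comm _ (1 - 2 / 2 ^ m), mul_assoc]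
    exact (spread_vecMul_lazyShift_pow_le_mul _ le_rfl).trans
      (mul_le_mul_of_nonneg_left ih (one_sub_two_div_two_pow_nonneg (NeZero.ne m)))

lemma tendsto_spread_vecMul_lazyShift_pow (v : Fin m → ℝ) :
    Tendsto (fun j => spread (v ᵥ* lazyShift m ^ j)) atTop (𝓝 0) := by
  have hθ0 := one_sub_two_div_two_pow_nonneg (NeZero.ne m)
  have hθ1 : 1 - 2 / (2 : ℝ) ^ m < 1 := sub_lt_self _ (by positivity)
  have hbound : Tendsto (fun j => (1 - 2 / 2 ^ m) ^ (j / m) * spread v) atTop (𝓝 0) := by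
    simpa using ((tendsto_pow_atTop_nhds_zero_of_lt_one hθ0 hθ1).comp
      (Nat.tendsto_div_const_atTop (NeZero.ne m))).mul_const (spread v)
  refine squeeze_zero (fun j => spread_nonneg _) (fun j => ?_) hbound
  exact (antitone_spread_vecMul_lazyShift_pow v (Nat.mul_div_le j m)).trans
    (spread_vecMul_lazyShift_pow_mul_le v _)

theorem tendsto_vecMul_lazyShift_pow (v : Fin m → ℝ) :
    Tendsto (fun j => v ᵥ* lazyShift m ^ j) atTop (𝓝 fun _ => (∑ i, v i) / m) := by
  refine tendsto_pi_nhds.2 fun i => tendsto_iff_norm_sub_tendsto_zero.2 ?_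
  refine squeeze_zero (fun _ => norm_nonneg _) (fun j => ?_)
    (tendsto_spread_vecMul_lazyShift_pow v)
  have h := abs_sub_mean_le_spread (v ᵥ* lazyShift m ^ j) i
  rwa [sum_vecMul_lazyShift_pow, Fintype.card_fin] at h

end LazyWalk

lemma hcyc_sub_self (n : ℕ) {k j : ℕ} (hj : j ≤ k) : hcyc n k (k - j) = hcyc n k j := by
  unfold hcyc
  split_ifs with h1 h2 h2
  · rw [show k - j = j by omega]
  · rfl
  · rw [Nat.sub_sub_self hj]
  · omega

lemma hcyc_self (n k : ℕ) : hcyc n k k = 1 := by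
  unfold hcyc
  split_ifs with h
  · obtain rfl : k = 0 := by omega
    simp
  · simp

def hcycEvalTwo (n k : ℕ) : ℕ :=
  ∑ j ∈ range (k + 1), hcyc n k j * 2 ^ j

lemma two_pow_le_hcycEvalTwo (n k : ℕ) : 2 ^ k ≤ hcycEvalTwo n k := by
  unfold hcycEvalTwo
  simpa [hcyc_self] using
    single_le_sum (f := fun j => hcyc n k j * 2 ^ j) (fun _ _ => Nat.zero_le _)
      (self_mem_range_succ k)

lemma hcycEvalTwo_pos (n k : ℕ) : 0 < hcycEvalTwo n k :=
  (Nat.two_pow_pos k).trans_le (two_pow_le_hcycEvalTwo n k)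

lemma hcyc_mul_two_pow_mul_two_pow_le (n : ℕ) {k j : ℕ} (hj : j ≤ k) :
    hcyc n k j * 2 ^ j * 2 ^ k ≤ 4 ^ j * hcycEvalTwo n k := by
  have hpow : 2 ^ j * 2 ^ k = 4 ^ j * 2 ^ (k - j) := by
    obtain ⟨d, rfl⟩ := Nat.exists_eq_add_of_le hj
    rw [Nat.add_sub_cancel_left, show (4 : ℕ) ^ j = 2 ^ j * 2 ^ j by rw [← mul_pow]; rfl]
    ring
  rw [mul_assoc, hpow, mul_left_comm, ← hcyc_sub_self n hj]
  exact Nat.mul_le_mul_left _ <| single_le_sum (f := fun j => hcyc n k j * 2 ^ j)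
    (fun _ _ => Nat.zero_le _) (mem_range.2 (Nat.lt_succ_of_le (Nat.sub_le k j)))

noncomputable def hcycWeight (n k j : ℕ) : ℝ :=
  (hcyc n k j * 2 ^ j : ℕ) / hcycEvalTwo n k

lemma hcycWeight_nonneg (n k j : ℕ) : 0 ≤ hcycWeight n k j := by
  unfold hcycWeight
  positivity

lemma sum_hcycWeight (n k : ℕ) : ∑ j ∈ range (k + 1), hcycWeight n k j = 1 := by
  have hpos : (0 : ℝ) < hcycEvalTwo n k := Nat.cast_pos.2 (hcycEvalTwo_pos n k)
  simp only [hcycWeight]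
  rw [← sum_div, ← Nat.cast_sum]
  exact div_self hpos.ne'

lemma tendsto_hcycWeight (n j : ℕ) : Tendsto (fun k => hcycWeight n k j) atTop (𝓝 0) := by
  have hbound : Tendsto (fun k : ℕ => (4 : ℝ) ^ j * (2⁻¹) ^ k) atTop (𝓝 0) := by
    simpa using (tendsto_pow_atTop_nhds_zero_of_lt_one (by norm_num : (0 : ℝ) ≤ 2⁻¹)
      (by norm_num)).const_mul ((4 : ℝ) ^ j)
  refine squeeze_zero' (.of_forall fun k => hcycWeight_nonneg n k j)
    ((eventually_ge_atTop j).mono fun k hk => ?_) hbound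
  have hpos : (0 : ℝ) < hcycEvalTwo n k := Nat.cast_pos.2 (hcycEvalTwo_pos n k)
  rw [hcycWeight, div_le_iff₀ hpos, inv_pow, mul_assoc, ← div_eq_inv_mul, mul_div_assoc',
    le_div_iff₀ (by positivity)]
  exact_mod_cast hcyc_mul_two_pow_mul_two_pow_le n hk

lemma tendsto_inv_one_add_hcycEvalTwo (n : ℕ) :
    Tendsto (fun k => (1 + (hcycEvalTwo n k : ℝ))⁻¹) atTop (𝓝 0) := by
  refine tendsto_inv_atTop_zero.comp (tendsto_atTop_add_const_left _ 1 ?_)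
  refine tendsto_atTop_mono (fun k => ?_) (tendsto_pow_atTop_atTop_of_one_lt one_lt_two)
  exact_mod_cast two_pow_le_hcycEvalTwo n k

section FaceVector

variable {m : ℕ} [NeZero m]

lemma sum_e1 : ∑ i, e1 m i = 1 := by
  simp [e1, Fin.val_eq_zero_iff]

lemma lmC_apply (n k : ℕ) (i : Fin m) :
    lmC m n k i = e1 m i + ∑ j ∈ range (k + 1),
      ((hcyc n k j * 2 ^ j : ℕ) : ℝ) * (e1 m ᵥ* lazyShift m ^ j) (i - 1) := by
  have hcomm : Commute (cyclicShift m)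
      (∑ j ∈ range (k + 1), (hcyc n k j : ℝ) • (1 + cyclicShift m) ^ j) :=
    Commute.sum_right _ _ _ fun j _ =>
      (((Commute.one_right _).add_right (Commute.refl _)).pow_right j).smul_right _
  rw [lmC, hcomm.eq, vecMul_add, vecMul_one, ← vecMul_vecMul, Pi.add_apply,
    vecMul_cyclicShift_apply, vecMul_sum, Finset.sum_apply]
  congr 1
  refine sum_congr rfl fun j _ => ?_
  rw [one_add_cyclicShift_pow, smul_smul, vecMul_smul, Pi.smul_apply, smul_eq_mul]
  push_cast
  ring

lemma sum_lmC (n k : ℕ) : ∑ i, lmC m n k i = 1 + hcycEvalTwo n k := by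
  have hshift : ∀ w : Fin m → ℝ, ∑ i, w (i - 1) = ∑ i, w i := fun w =>
    Fintype.sum_equiv (Equiv.subRight 1) _ _ fun _ => rfl
  simp only [lmC_apply, sum_add_distrib, sum_e1]
  rw [sum_comm]
  simp only [← mul_sum, hshift, sum_vecMul_lazyShift_pow, sum_e1, mul_one, hcycEvalTwo,
    Nat.cast_sum]

lemma inv_sum_lmC_smul_lmC_apply (n k : ℕ) (i : Fin m) :
    ((∑ i, lmC m n k i)⁻¹ • lmC m n k) i
      = (1 + (hcycEvalTwo n k : ℝ))⁻¹ * e1 m i + (1 - (1 + (hcycEvalTwo n k : ℝ))⁻¹) *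
        ∑ j ∈ range (k + 1), hcycWeight n k j * (e1 m ᵥ* lazyShift m ^ j) (i - 1) := by
  have hpos : (0 : ℝ) < hcycEvalTwo n k := Nat.cast_pos.2 (hcycEvalTwo_pos n k)
  rw [sum_lmC, Pi.smul_apply, lmC_apply, smul_eq_mul]
  simp only [hcycWeight, div_mul_eq_mul_div, ← sum_div]
  field_simp
  ring

end FaceVector

/-- The normalized reversed `m`-modular face vectors of cyclic polytopes converge to the
uniform vector `(1/m, …, 1/m)`. -/
theorem lmC_tendsto_uniform (m n : ℕ) (hm : 0 < m) :
    Filter.Tendsto (fun k : ℕ => (∑ i, lmC m n k i)⁻¹ • lmC m n k)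
      Filter.atTop (nhds (fun _ : Fin m => (m : ℝ)⁻¹)) := by
  have : NeZero m := ⟨hm.ne'⟩
  have hinv := tendsto_inv_one_add_hcycEvalTwo n
  refine tendsto_pi_nhds.2 fun i => ?_
  have hwalk : Tendsto (fun j => (e1 m ᵥ* lazyShift m ^ j) (i - 1)) atTop (𝓝 (m : ℝ)⁻¹) := by
    simpa [sum_e1] using tendsto_pi_nhds.1 (tendsto_vecMul_lazyShift_pow (e1 m)) (i - 1)
  have havg := tendsto_sum_range_mul_of_tendsto (hcycWeight_nonneg n) (sum_hcycWeight n)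
    (tendsto_hcycWeight n) hwalk
  simp_rw [inv_sum_lmC_smul_lmC_apply]
  simpa using (hinv.mul_const (e1 m i)).add
    (((tendsto_const_nhds (x := (1 : ℝ))).sub hinv).mul havg)
end
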